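/- arXiv:2112.01884 — 2 statements merged into one kernel-verified Lean document; each statement's English description precedes it below -/
import Mathlib

section
/- Let A, B be vertices of SG(n,k) with A ∩ B ≠ ∅, A ≠ B, and X = A ∪ B. If every connected component of the subgraph of C_n induced by X has at most 2 vertices, then dist(A,B) = 2. -/
/-- The cycle graph `C_n` on vertex set `ZMod n` (representing `{1,…,n}` cyclically). -/
def CycleGraph (n : ℕ) : SimpleGraph (ZMod n) where
  Adj i j := i ≠ j ∧ (i + 1 = j ∨ j + 1 = i)
  symm := ⟨fun i j ⟨h, h2⟩ => ⟨h.symm, h2.symm⟩⟩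
  loopless := ⟨fun i ⟨h, _⟩ => h rfl⟩

/-- A subset of `ZMod n` is 2-stable if it contains no two cyclically consecutive elements. -/
def Stable2 (n : ℕ) (S : Finset (ZMod n)) : Prop := ∀ i ∈ S, i + 1 ∉ S

/-- Vertices of the Schrijver graph: 2-stable `k`-subsets of `{1,…,n}`. -/
def SGVert (n k : ℕ) : Type := {S : Finset (ZMod n) // S.card = k ∧ Stable2 n S}

/-- The Schrijver graph `SG(n,k)`: 2-stable `k`-subsets, adjacent iff disjoint. -/
def SG (n k : ℕ) : SimpleGraph (SGVert n k) where
  Adj A B := A ≠ B ∧ Disjoint A.1 B.1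
  symm := ⟨fun A B ⟨h, h2⟩ => ⟨h.symm, h2.symm⟩⟩
  loopless := ⟨fun A ⟨h, _⟩ => h rfl⟩

/-!
Write `X = A ∪ B`. When `n ∤ 2`, components of size at most two in `C_n[X]` mean that `X` contains
no three cyclically consecutive points. Pushing every `a ∈ A` to the first of `a + 1`, `a + 2`
outside `X` then gives a 2-stable `k`-set disjoint from `X`, i.e. a common neighbour of `A` and `B`;
since `A` and `B` meet, they are not adjacent, so `dist(A, B) = 2`. When `n ∣ 2` a 2-stable set has
at most one point, so `A ∩ B ≠ ∅` forces `A = B`.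
-/

open SimpleGraph Finset

lemma SimpleGraph.three_le_card_supp_connectedComponentMk {V : Type*} [Finite V]
    {G : SimpleGraph V} {u v w : V} (huv : G.Adj u v) (hvw : G.Adj v w) (huw : u ≠ w) :
    3 ≤ Nat.card (G.connectedComponentMk v).supp := by
  have hsub : ({u, v, w} : Set V) ⊆ (G.connectedComponentMk v).supp := by
    rintro x (rfl | rfl | rfl)
    · exact ConnectedComponent.sound huv.reachable
    · rfl
    · exact ConnectedComponent.sound hvw.reachable.symm
  rw [Nat.card_coe_set_eq, ← Set.ncard_eq_three.mpr ⟨u, v, w, huv.ne, huw, hvw.ne, rfl⟩]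
  exact Set.ncard_le_ncard hsub (Set.toFinite _)

lemma Stable2.eq_singleton_of_dvd_two {n : ℕ} (hn : n ∣ 2) {S : Finset (ZMod n)} (hS : Stable2 n S)
    {z : ZMod n} (hz : z ∈ S) : S = {z} := by
  have hsmall : ∀ x y : ZMod n, x = y ∨ x + 1 = y := by
    rcases (Nat.dvd_prime Nat.prime_two).mp hn with rfl | rfl <;> decide
  refine eq_singleton_iff_unique_mem.mpr ⟨hz, fun x hx => ?_⟩
  rcases hsmall x z with hxz | hxz
  · exact hxz
  · exact absurd (hxz ▸ hz) (hS x hx)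

namespace SG

variable {n k : ℕ}

def NoThreeConsecutive (X : Finset (ZMod n)) : Prop := ∀ a ∈ X, a + 1 ∈ X → a + 2 ∉ X

lemma noThreeConsecutive_of_card_supp_le_two (hn : ¬ n ∣ 2) {X : Finset (ZMod n)}
    (hcomp : ∀ C : ((CycleGraph n).induce (X : Set (ZMod n))).ConnectedComponent,
      Nat.card C.supp ≤ 2) :
    NoThreeConsecutive X := by
  have h2 : (2 : ZMod n) ≠ 0 := fun h =>
    hn ((ZMod.natCast_eq_zero_iff 2 n).mp (by exact_mod_cast h))
  have h1 : (1 : ZMod n) ≠ 0 := fun h => h2 (by rw [← one_add_one_eq_two, h, add_zero])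
  intro a ha ha1 ha2
  have hadj : ∀ b, (CycleGraph n).Adj b (b + 1) := fun b =>
    ⟨fun h => h1 (left_eq_add.mp h), Or.inl rfl⟩
  have h3 := three_le_card_supp_connectedComponentMk (G := (CycleGraph n).induce (X : Set (ZMod n)))
    (u := ⟨a, ha⟩) (v := ⟨a + 1, ha1⟩) (w := ⟨a + 2, ha2⟩) (hadj a)
    (by simpa only [induce_adj, add_assoc, one_add_one_eq_two] using hadj (a + 1))
    (fun h => h2 (left_eq_add.mp (congrArg Subtype.val h)))
  have := hcomp (connectedComponentMk _ ⟨a + 1, ha1⟩)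
  omega

def shiftOut (X : Finset (ZMod n)) (a : ZMod n) : ZMod n := if a + 1 ∈ X then a + 2 else a + 1

variable {X A : Finset (ZMod n)}

lemma shiftOut_notMem (hX : NoThreeConsecutive X) {a : ZMod n} (ha : a ∈ X) :
    shiftOut X a ∉ X := by
  unfold shiftOut
  split_ifs with h
  exacts [hX a ha h, h]

lemma injOn_shiftOut (hA : Stable2 n A) : Set.InjOn (shiftOut X) A := by
  intro a ha a' ha' he
  unfold shiftOut at he
  split_ifs at he
  · linear_combination he
  · exact absurd ((show a + 1 = a' by linear_combination he) ▸ ha') (hA a ha)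
  · exact absurd ((show a' + 1 = a by linear_combination -he) ▸ ha) (hA a' ha')
  · linear_combination he

lemma stable2_image_shiftOut (hX : NoThreeConsecutive X) (hA : Stable2 n A) (hAX : A ⊆ X) :
    Stable2 n (A.image (shiftOut X)) := by
  simp only [Stable2, mem_image, forall_exists_index, and_imp, forall_apply_eq_imp_iff₂, not_exists,
    not_and]
  intro a ha b hb he
  by_cases hb1 : b + 1 ∈ X <;> by_cases ha1 : a + 1 ∈ X <;>
    simp only [shiftOut, hb1, ha1, if_true, if_false] at he
  · exact hA a ha ((show b = a + 1 by linear_combination he) ▸ hb)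
  · exact ha1 ((show b = a by linear_combination he) ▸ hb1)
  · exact hX a (hAX ha) ha1 ((show b = a + 2 by linear_combination he) ▸ hAX hb)
  · exact ha1 ((show b = a + 1 by linear_combination he) ▸ hAX hb)

lemma disjoint_image_shiftOut (hX : NoThreeConsecutive X) (hAX : A ⊆ X) :
    Disjoint (A.image (shiftOut X)) X := by
  rw [Finset.disjoint_left]
  intro _ hc
  obtain ⟨a, ha, rfl⟩ := mem_image.mp hc
  exact shiftOut_notMem hX (hAX ha)

lemma adj_of_disjoint (hk : 0 < k) {A B : SGVert n k} (h : Disjoint A.1 B.1) : (SG n k).Adj A B :=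
  ⟨fun hAB => by
    subst hAB
    rw [disjoint_self, bot_eq_empty] at h
    exact hk.ne' (A.2.1 ▸ h ▸ card_empty), h⟩

lemma exists_common_neighbor (hk : 0 < k) {A B : SGVert n k}
    (hX : NoThreeConsecutive (A.1 ∪ B.1)) : ((SG n k).commonNeighbors A B).Nonempty := by
  let C : SGVert n k := ⟨A.1.image (shiftOut (A.1 ∪ B.1)),
    (card_image_of_injOn (injOn_shiftOut A.2.2)).trans A.2.1,
    stable2_image_shiftOut hX A.2.2 subset_union_left⟩
  have hC : Disjoint C.1 (A.1 ∪ B.1) := disjoint_image_shiftOut hX subset_union_left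
  refine ⟨C, (mem_commonNeighbors _).mpr ⟨?_, ?_⟩⟩
  · exact adj_of_disjoint hk (disjoint_union_right.mp hC).1.symm
  · exact (adj_of_disjoint hk (disjoint_union_right.mp hC).2).symm

end SG

open SG in
theorem stmt5 (n k : ℕ) (A B : SGVert n k) (hne : A ≠ B) (h : (A.1 ∩ B.1).Nonempty)
    (hcomp : ∀ C : ((CycleGraph n).induce (↑(A.1 ∪ B.1) : Set (ZMod n))).ConnectedComponent,
      Nat.card C.supp ≤ 2) :
    (SG n k).dist A B = 2 := by
  obtain ⟨z, hz⟩ := h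
  obtain ⟨hzA, hzB⟩ := mem_inter.mp hz
  by_cases hn : n ∣ 2
  · refine absurd (Subtype.ext ?_) hne
    rw [A.2.2.eq_singleton_of_dvd_two hn hzA, B.2.2.eq_singleton_of_dvd_two hn hzB]
  have hk : 0 < k := A.2.1 ▸ card_pos.mpr ⟨z, hzA⟩
  have hnadj : ¬ (SG n k).Adj A B := fun hAB => disjoint_left.mp hAB.2 hzA hzB
  have hX := noThreeConsecutive_of_card_supp_le_two hn hcomp
  rw [SimpleGraph.dist, edist_eq_two_iff.mpr ⟨hne, hnadj, exists_common_neighbor hk hX⟩]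
  rfl
end

section
/- Let n = 2k + r with 2 ≤ r ≤ k − 3 and k ≥ 5. Then the diameter of SG(n,k) is at least 4. Specifically, with t = k−3−r, the vertices A = {1,3,5} ∪ {7+2i : 0 ≤ i ≤ t} ∪ {7+2t+3j : 1 ≤ j ≤ r−1} and B = {1,3,6} ∪ {8+2i : 0 ≤ i ≤ t} ∪ {8+2t+3j : 1 ≤ j ≤ r−1} satisfy dist(A,B) ≥ 4. -/
/-!
Every neighbour of a vertex `S` is a stable `k`-set inside the complement of `S`. The complement
of `A` splits into `k` runs of cyclically consecutive points, each of length one or two, and a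
stable set takes at most one point from each run; so a stable `k`-set avoiding `A` meets every run
and in particular contains the singleton run `{2}`. In the same way every stable `k`-set avoiding
`B` contains `2` and `7`. Hence a neighbour of `A` is never adjacent to a neighbour of `B` (both
contain `2`), `A` and `B` have no common neighbour (`7 ∈ A`), and `A ≠ B` are not adjacent
(`1 ∈ A ∩ B`).

For the diameter, `SG(n,k)` is connected when `2k ≤ n`: `S` is adjacent to its rotation `S + 1`,
so all rotations of `S` are reachable, and if `x ∈ S` with `x - 2 ∉ S`, then moving `x` to `x - 1`
gives a vertex that is still adjacent to `S + 1`. Once `0 ∈ S`, such moves lower `∑ x.val` until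
`S = {0, 2, …, 2k - 2}`.
-/

open Finset

variable {n k : ℕ}

namespace Nat

lemma mem_image_range_affine {a b c m : ℕ} (hb : 0 < b) :
    m ∈ (range c).image (fun i => a + b * i) ↔ a ≤ m ∧ m < a + b * c ∧ m % b = a % b := by
  constructor
  · rintro h
    obtain ⟨i, hi, rfl⟩ := mem_image.mp h
    exact ⟨le_add_right a _, by gcongr; exact mem_range.mp hi, by simp⟩
  · rintro ⟨ham, hmc, hmod⟩
    have hdvd : b ∣ m - a := Nat.dvd_of_mod_eq_zero (Nat.sub_mod_eq_zero_of_mod_eq hmod)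
    refine mem_image.mpr ⟨(m - a) / b, mem_range.mpr ?_, ?_⟩
    · exact (Nat.div_lt_iff_lt_mul hb).mpr (by rw [mul_comm]; omega)
    · rw [Nat.mul_div_cancel' hdvd]; omega

lemma mem_image_Icc_affine {a b lo hi m : ℕ} (hb : 0 < b) :
    m ∈ (Icc lo hi).image (fun j => a + b * j) ↔
      a + b * lo ≤ m ∧ m ≤ a + b * hi ∧ m % b = a % b := by
  constructor
  · rintro h
    obtain ⟨j, hj, rfl⟩ := mem_image.mp h
    obtain ⟨hlo, hhi⟩ := mem_Icc.mp hj
    exact ⟨by gcongr, by gcongr, by simp⟩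
  · rintro ⟨hlo, hhi, hmod⟩
    have hdvd : b ∣ m - a := Nat.dvd_of_mod_eq_zero (Nat.sub_mod_eq_zero_of_mod_eq hmod)
    have hm : a + b * ((m - a) / b) = m := by rw [Nat.mul_div_cancel' hdvd]; omega
    refine mem_image.mpr ⟨(m - a) / b, mem_Icc.mpr ⟨?_, ?_⟩, hm⟩
    · by_contra! h; nlinarith [Nat.mul_lt_mul_left hb |>.mpr h]
    · by_contra! h; nlinarith [Nat.mul_lt_mul_left hb |>.mpr h]

end Nat

lemma ZMod.natCast_inj_of_lt {a b : ℕ} (ha : a < n) (hb : b < n) :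
    (a : ZMod n) = b ↔ a = b := by
  rw [ZMod.natCast_eq_natCast_iff', Nat.mod_eq_of_lt ha, Nat.mod_eq_of_lt hb]

namespace Stable2

variable {S : Finset (ZMod n)}

lemma image_add (hS : Stable2 n S) (c : ZMod n) : Stable2 n (S.image (· + c)) := by
  intro z hz hz1
  obtain ⟨x, hx, rfl⟩ := mem_image.mp hz
  obtain ⟨y, hy, hxy⟩ := mem_image.mp hz1
  exact hS x hx (by rwa [show y = x + 1 by linear_combination hxy] at hy)

lemma disjoint_image_add_one (hS : Stable2 n S) : Disjoint S (S.image (· + 1)) := by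
  simp only [disjoint_left, mem_image, not_exists, not_and]
  rintro x hx y hy rfl
  exact hS y hy hx

lemma not_sub_one_mem (hS : Stable2 n S) {x : ZMod n} (hx : x ∈ S) : x - 1 ∉ S :=
  fun h => hS _ h (by rwa [sub_add_cancel])

end Stable2

namespace SGVert

def rotate (c : ZMod n) (v : SGVert n k) : SGVert n k :=
  ⟨v.1.image (· + c), by rw [card_image_of_injective _ (add_left_injective c), v.2.1],
    v.2.2.image_add c⟩

lemma rotate_zero (v : SGVert n k) : v.rotate 0 = v :=
  Subtype.ext (by simp [rotate])

lemma rotate_rotate (a b : ZMod n) (v : SGVert n k) : (v.rotate b).rotate a = v.rotate (b + a) :=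
  Subtype.ext (by simp only [rotate, image_image, Function.comp_def, add_assoc])

end SGVert

lemma SG_adj_of_disjoint (hk : 0 < k) {u v : SGVert n k} (h : Disjoint u.1 v.1) :
    (SG n k).Adj u v := by
  refine ⟨fun huv => ?_, h⟩
  obtain ⟨x, hx⟩ := card_pos.mp (u.2.1 ▸ hk)
  exact disjoint_left.mp h hx (huv ▸ hx)

lemma SG_reachable_rotate [NeZero n] (hk : 0 < k) (v : SGVert n k) (c : ZMod n) :
    (SG n k).Reachable v (v.rotate c) := by
  rw [← ZMod.natCast_zmod_val c]
  induction c.val with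
  | zero => rw [Nat.cast_zero, v.rotate_zero]
  | succ m ih =>
    rw [Nat.cast_succ, ← SGVert.rotate_rotate]
    exact ih.trans (SG_adj_of_disjoint hk (v.rotate m).2.2.disjoint_image_add_one).reachable

def evens (n k : ℕ) : Finset (ZMod n) := (range k).image (fun i => ((2 * i : ℕ) : ZMod n))

lemma card_evens (h : 2 * k ≤ n + 1) : #(evens n k) = k := by
  rw [evens, card_image_of_injOn, card_range]
  intro a ha b hb hab
  simp only [coe_range, Set.mem_Iio] at ha hb
  have := (ZMod.natCast_inj_of_lt (by omega) (by omega)).mp hab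
  omega

lemma stable_evens (h : 2 * k ≤ n) : Stable2 n (evens n k) := by
  simp only [Stable2, evens, mem_image, mem_range, forall_exists_index, and_imp,
    forall_apply_eq_imp_iff₂, not_exists, not_and]
  intro a ha b hb hab
  rw [← Nat.cast_succ, ZMod.natCast_inj_of_lt (by omega) (by omega)] at hab
  omega

lemma eq_evens_of_forall_sub_two_mem [NeZero n] {S : Finset (ZMod n)} (hS : Stable2 n S)
    (h0 : 0 ∈ S) (hcard : #S = k) (hclosed : ∀ x ∈ S, x ≠ 0 → x - 2 ∈ S) : S = evens n k := by
  have key : ∀ m < n, (m : ZMod n) ∈ S →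
      m % 2 = 0 ∧ ∀ i ≤ m / 2, ((2 * i : ℕ) : ZMod n) ∈ S := by
    intro m
    induction m using Nat.strong_induction_on with
    | _ m ih =>
      intro hmn hm
      rcases m with _ | _ | m
      · exact ⟨rfl, fun i hi => by simpa [show i = 0 by omega] using h0⟩
      · exact absurd (by simpa using hm) (hS 0 h0)
      · have hm2 : ((m : ℕ) : ZMod n) ∈ S := by
          have := hclosed _ hm (by
            rw [← Nat.cast_zero, Ne, ZMod.natCast_inj_of_lt hmn (by omega)]; omega)
          rwa [show ((m + 1 + 1 : ℕ) : ZMod n) - 2 = m by push_cast; ring] at this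
        obtain ⟨heven, hall⟩ := ih m (by omega) (by omega) hm2
        refine ⟨by omega, fun i hi => ?_⟩
        rcases Nat.lt_or_ge i ((m + 2) / 2) with hi' | hi'
        · exact hall i (by omega)
        · rwa [show 2 * i = m + 2 by omega]
  have hsub : S ⊆ evens n k := by
    intro x hx
    have hxS : ((x.val : ℕ) : ZMod n) ∈ S := by rwa [ZMod.natCast_zmod_val]
    obtain ⟨heven, hall⟩ := key x.val (ZMod.val_lt x) hxS
    have hle : x.val / 2 + 1 ≤ k := by
      rw [← hcard, ← card_evens (n := n) (k := x.val / 2 + 1) (by have := ZMod.val_lt x; omega)]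
      refine card_le_card fun y hy => ?_
      obtain ⟨i, hi, rfl⟩ := mem_image.mp hy
      exact hall i (by simpa [Nat.lt_succ_iff] using hi)
    refine mem_image.mpr ⟨x.val / 2, mem_range.mpr (by omega), ?_⟩
    rw [show 2 * (x.val / 2) = x.val by omega, ZMod.natCast_zmod_val]
  exact eq_of_subset_of_card_le hsub (by rw [hcard]; exact card_image_le.trans (card_range k).le)

lemma SG_exists_reachable_insert_sub_one [NeZero n] (hk : 0 < k) (h1 : (1 : ZMod n) ≠ 0)
    (v : SGVert n k) {x : ZMod n} (hx : x ∈ v.1) (hx2 : x - 2 ∉ v.1) :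
    ∃ w : SGVert n k, w.1 = insert (x - 1) (v.1.erase x) ∧ (SG n k).Reachable v w := by
  have hS := v.2.2
  have hx1 : x - 1 ∉ v.1 := hS.not_sub_one_mem hx
  have hx1x : x - 1 ≠ x := by simpa [sub_eq_self] using h1
  have hcard : #(insert (x - 1) (v.1.erase x)) = k := by
    rw [card_insert_of_notMem (fun h => hx1 (mem_of_mem_erase h)), card_erase_of_mem hx, v.2.1]
    omega
  have hstable : Stable2 n (insert (x - 1) (v.1.erase x)) := by
    intro y hy hy1
    rcases mem_insert.mp hy with rfl | hy
    · rw [sub_add_cancel] at hy1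
      rcases mem_insert.mp hy1 with h | h
      · exact hx1x h.symm
      · exact notMem_erase x v.1 h
    · rcases mem_insert.mp hy1 with h | h
      · exact hx2 (mem_of_mem_erase (by rwa [show y = x - 2 by linear_combination h] at hy))
      · exact hS y (mem_of_mem_erase hy) (mem_of_mem_erase h)
  have hdisj : Disjoint (insert (x - 1) (v.1.erase x)) (v.rotate 1).1 := by
    simp only [SGVert.rotate, disjoint_left, mem_insert, mem_image, not_exists, not_and]
    rintro z (rfl | hz) y hyv hyz
    · exact hx2 (by rwa [show y = x - 2 by linear_combination hyz] at hyv)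
    · exact hS y hyv (mem_of_mem_erase (hyz ▸ hz))
  refine ⟨⟨_, hcard, hstable⟩, rfl, (SG_reachable_rotate hk v 1).trans ?_⟩
  exact (SG_adj_of_disjoint hk hdisj).symm.reachable

def evensVertex (h : 2 * k ≤ n) : SGVert n k := ⟨evens n k, card_evens (by omega), stable_evens h⟩

lemma SG_reachable_evensVertex_of_zero_mem (hk : 0 < k) (h : 2 * k ≤ n) (v : SGVert n k)
    (h0 : 0 ∈ v.1) : (SG n k).Reachable v (evensVertex h) := by
  have : Fact (1 < n) := ⟨by omega⟩
  induction hv : ∑ y ∈ v.1, y.val using Nat.strong_induction_on generalizing v with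
  | _ m ih =>
  by_cases heq : v.1 = evens n k
  · rw [show v = evensVertex h from Subtype.ext heq]
  obtain ⟨x, hx, hx0, hx2⟩ : ∃ x ∈ v.1, x ≠ 0 ∧ x - 2 ∉ v.1 := by
    by_contra! hclosed
    exact heq (eq_evens_of_forall_sub_two_mem v.2.2 h0 v.2.1 hclosed)
  obtain ⟨w, hw, hvw⟩ := SG_exists_reachable_insert_sub_one hk one_ne_zero v hx hx2
  refine hvw.trans (ih _ ?_ w ?_ rfl)
  · have hx1 : 1 ≤ x.val := ZMod.val_pos.mpr hx0
    have hsub : (x - 1).val = x.val - 1 := by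
      rw [ZMod.val_sub (by rwa [ZMod.val_one]), ZMod.val_one]
    have herase := sum_erase_add v.1 (fun y => y.val) hx
    rw [← hv, hw, sum_insert (fun h => v.2.2.not_sub_one_mem hx (mem_of_mem_erase h)), hsub]
    omega
  · rw [hw]
    exact mem_insert_of_mem (mem_erase.mpr ⟨Ne.symm hx0, h0⟩)

theorem SG_connected (hk : 0 < k) (h : 2 * k ≤ n) : (SG n k).Connected := by
  have : NeZero n := ⟨by omega⟩
  refine (SimpleGraph.connected_iff_exists_forall_reachable _).mpr ⟨evensVertex h, fun v => ?_⟩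
  obtain ⟨x, hx⟩ := card_pos.mp (v.2.1 ▸ hk)
  have h0 : (0 : ZMod n) ∈ (v.rotate (-x)).1 := mem_image.mpr ⟨x, hx, add_neg_cancel x⟩
  exact ((SG_reachable_rotate hk v (-x)).trans
    (SG_reachable_evensVertex_of_zero_mem hk h _ h0)).symm

-- Each point outside `N` is in `R` or follows a point of `R`, so `R` contains the first point of
-- every run of the complement of `N`. A stable set avoiding `N` has at most one point per run;
-- if it is as large as `R`, it must contain every singleton run `{e}`.
lemma mem_of_forall_mem_or_sub_one_mem {C N R : Finset (ZMod n)} (hC : Stable2 n C)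
    (hCN : Disjoint C N) (hcover : ∀ x, x ∈ N ∨ x ∈ R ∨ x - 1 ∈ R) (hR : #R ≤ #C)
    {e : ZMod n} (he : e ∈ R) (he1 : e + 1 ∈ N) : e ∈ C := by
  by_contra heC
  let f : ZMod n → ZMod n := fun x => if x ∈ R then x else x - 1
  have hmaps : Set.MapsTo f C (R.erase e) := by
    intro x hx
    have hxN : x ∉ N := disjoint_left.mp hCN hx
    by_cases hxR : x ∈ R
    · simp only [f, if_pos hxR]
      exact mem_erase.mpr ⟨fun h => heC (h ▸ hx), hxR⟩
    · have hx1 : x - 1 ∈ R := ((hcover x).resolve_left hxN).resolve_left hxR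
      simp only [f, if_neg hxR]
      exact mem_erase.mpr ⟨fun h => hxN (by rwa [← h, sub_add_cancel] at he1), hx1⟩
  have hinj : Set.InjOn f C := by
    intro x hx y hy hxy
    by_cases hxR : x ∈ R <;> by_cases hyR : y ∈ R <;>
      simp only [f, hxR, hyR, if_true, if_false] at hxy
    · exact hxy
    · exact absurd (by rwa [hxy, sub_add_cancel]) (hC x hx)
    · exact absurd (by rwa [← hxy, sub_add_cancel]) (hC y hy)
    · exact sub_left_injective hxy
  have := card_le_card_of_injOn f hmaps hinj
  rw [card_erase_of_mem he] at this
  have : 0 < #R := card_pos.mpr ⟨e, he⟩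
  omega

lemma forall_natCast_mem_or [NeZero n] {N R : Finset ℕ} (h0 : 0 ∈ R ∨ n - 1 ∈ R)
    (hcover : ∀ m, m + 1 < n → m + 1 ∈ N ∨ m + 1 ∈ R ∨ m ∈ R) (x : ZMod n) :
    x ∈ N.image Nat.cast ∨ x ∈ R.image Nat.cast ∨ x - 1 ∈ R.image Nat.cast := by
  rw [← ZMod.natCast_zmod_val x]
  have hx := ZMod.val_lt x
  cases hv : x.val with
  | zero =>
    rcases h0 with h | h
    · exact Or.inr (Or.inl (mem_image_of_mem _ h))
    · refine Or.inr (Or.inr (mem_image.mpr ⟨n - 1, h, ?_⟩))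
      rw [Nat.cast_sub NeZero.one_le, ZMod.natCast_self, Nat.cast_zero, Nat.cast_one]
  | succ m =>
    rcases hcover m (hv ▸ hx) with h | h | h
    · exact Or.inl (mem_image_of_mem _ h)
    · exact Or.inr (Or.inl (mem_image_of_mem _ h))
    · exact Or.inr (Or.inr (mem_image.mpr ⟨m, h, by push_cast; ring⟩))

lemma natCast_mem_of_forall_mem_or [NeZero n] {C : Finset (ZMod n)} {N R : Finset ℕ}
    (hC : Stable2 n C) (hCN : Disjoint C (N.image Nat.cast)) (h0 : 0 ∈ R ∨ n - 1 ∈ R)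
    (hcover : ∀ m, m + 1 < n → m + 1 ∈ N ∨ m + 1 ∈ R ∨ m ∈ R) (hR : #R ≤ #C) {e : ℕ}
    (he : e ∈ R) (he1 : e + 1 ∈ N) : (e : ZMod n) ∈ C :=
  mem_of_forall_mem_or_sub_one_mem hC hCN (forall_natCast_mem_or h0 hcover)
    (card_image_le.trans hR) (mem_image_of_mem _ he)
    (mem_image.mpr ⟨e + 1, he1, Nat.cast_succ e⟩)

lemma SimpleGraph.Walk.four_le_length {V : Type*} {G : SimpleGraph V} {a b : V} (h0 : a ≠ b)
    (h1 : ¬G.Adj a b) (h2 : ∀ c, G.Adj a c → ¬G.Adj c b)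
    (h3 : ∀ c d, G.Adj a c → G.Adj d b → ¬G.Adj c d) : ∀ p : G.Walk a b, 4 ≤ p.length
  | .nil => absurd rfl h0
  | .cons h .nil => absurd h h1
  | .cons h (.cons h' .nil) => absurd h' (h2 _ h)
  | .cons h (.cons h' (.cons h'' .nil)) => absurd h' (h3 _ _ h h'')
  | .cons _ (.cons _ (.cons _ (.cons _ _))) => by simp

lemma SimpleGraph.Reachable.four_le_dist {V : Type*} {G : SimpleGraph V} {a b : V}
    (hr : G.Reachable a b) (h0 : a ≠ b) (h1 : ¬G.Adj a b) (h2 : ∀ c, G.Adj a c → ¬G.Adj c b)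
    (h3 : ∀ c d, G.Adj a c → G.Adj d b → ¬G.Adj c d) : 4 ≤ G.dist a b := by
  obtain ⟨p, hp⟩ := hr.exists_walk_length_eq_dist
  exact hp ▸ SimpleGraph.Walk.four_le_length h0 h1 h2 h3 p

section Runs

-- With `t = k - 3 - r` and `s = r - 2`, so that `k = t + s + 5` and `n = 2t + 3s + 12`, these are
-- the paper's vertices `A` and `B`; `runStartsA` and `runStartsB` hold the first points of the
-- `k` runs of their complements in `ℤ/n` (for `A` the run `{n - 1, 0}` wraps around).
def setA (t s : ℕ) : Finset ℕ :=
  {1, 3, 5} ∪ (range (t + 1)).image (fun i => 7 + 2 * i) ∪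
    (Icc 1 (s + 1)).image (fun j => 7 + 2 * t + 3 * j)

def setB (t s : ℕ) : Finset ℕ :=
  {1, 3, 6} ∪ (range (t + 1)).image (fun i => 8 + 2 * i) ∪
    (Icc 1 (s + 1)).image (fun j => 8 + 2 * t + 3 * j)

def runStartsA (t s : ℕ) : Finset ℕ :=
  (range (t + 3)).image (fun i => 2 + 2 * i) ∪
    (range (s + 1)).image (fun j => 8 + 2 * t + 3 * j) ∪ {2 * t + 3 * s + 11}

def runStartsB (t s : ℕ) : Finset ℕ :=
  {0, 2, 4} ∪ (range (t + 1)).image (fun i => 7 + 2 * i) ∪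
    (range (s + 1)).image (fun j => 9 + 2 * t + 3 * j)

variable {t s m : ℕ}

lemma mem_setA : m ∈ setA t s ↔ (m % 2 = 1 ∧ m ≤ 2 * t + 7) ∨
    (2 * t + 7 ≤ m ∧ m ≤ 2 * t + 3 * s + 10 ∧ m % 3 = (2 * t + 7) % 3) := by
  simp only [setA, mem_union, mem_insert, mem_singleton, Nat.mem_image_range_affine two_pos,
    Nat.mem_image_Icc_affine three_pos]
  omega

lemma mem_setB : m ∈ setB t s ↔ m = 1 ∨ m = 3 ∨ m = 6 ∨ (m % 2 = 0 ∧ 8 ≤ m ∧ m ≤ 2 * t + 8) ∨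
    (2 * t + 11 ≤ m ∧ m ≤ 2 * t + 3 * s + 11 ∧ m % 3 = (2 * t + 8) % 3) := by
  simp only [setB, mem_union, mem_insert, mem_singleton, Nat.mem_image_range_affine two_pos,
    Nat.mem_image_Icc_affine three_pos]
  omega

lemma mem_runStartsA : m ∈ runStartsA t s ↔ (m % 2 = 0 ∧ 2 ≤ m ∧ m ≤ 2 * t + 6) ∨
    (2 * t + 8 ≤ m ∧ m ≤ 2 * t + 3 * s + 8 ∧ m % 3 = (2 * t + 8) % 3) ∨
    m = 2 * t + 3 * s + 11 := by
  simp only [runStartsA, mem_union, mem_singleton, Nat.mem_image_range_affine two_pos,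
    Nat.mem_image_range_affine three_pos]
  omega

lemma mem_runStartsB : m ∈ runStartsB t s ↔ m = 0 ∨ m = 2 ∨ m = 4 ∨
    (m % 2 = 1 ∧ 7 ≤ m ∧ m ≤ 2 * t + 7) ∨
    (2 * t + 9 ≤ m ∧ m ≤ 2 * t + 3 * s + 9 ∧ m % 3 = (2 * t + 9) % 3) := by
  simp only [runStartsB, mem_union, mem_insert, mem_singleton, Nat.mem_image_range_affine two_pos,
    Nat.mem_image_range_affine three_pos]
  omega

lemma card_runStartsA_le : #(runStartsA t s) ≤ t + s + 5 := by
  refine (card_union_le _ _).trans ?_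
  grw [card_union_le, card_image_le, card_image_le, card_range, card_range, card_singleton]
  omega

lemma card_runStartsB_le : #(runStartsB t s) ≤ t + s + 5 := by
  refine (card_union_le _ _).trans ?_
  grw [card_union_le, card_image_le, card_image_le, card_range, card_range]
  have : #({0, 2, 4} : Finset ℕ) = 3 := rfl
  omega

lemma setA_runStartsA_cover (hm : m + 1 < 2 * t + 3 * s + 12) :
    m + 1 ∈ setA t s ∨ m + 1 ∈ runStartsA t s ∨ m ∈ runStartsA t s := by
  simp only [mem_setA, mem_runStartsA]
  rcases Nat.lt_or_ge m (2 * t + 7) with h | h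
  · rcases Nat.mod_two_eq_zero_or_one m with h2 | h2 <;> omega
  · have : (m + t) % 3 = 0 ∨ (m + t) % 3 = 1 ∨ (m + t) % 3 = 2 := by omega
    rcases this with h3 | h3 | h3 <;> omega

lemma setB_runStartsB_cover (hm : m + 1 < 2 * t + 3 * s + 12) :
    m + 1 ∈ setB t s ∨ m + 1 ∈ runStartsB t s ∨ m ∈ runStartsB t s := by
  simp only [mem_setB, mem_runStartsB]
  rcases Nat.lt_or_ge m (2 * t + 8) with h | h
  · rcases Nat.mod_two_eq_zero_or_one m with h2 | h2 <;> omega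
  · have : (m + t) % 3 = 0 ∨ (m + t) % 3 = 1 ∨ (m + t) % 3 = 2 := by omega
    rcases this with h3 | h3 | h3 <;> omega

end Runs

section ForcedPoints

variable {t s e : ℕ} (hn : n = 2 * t + 3 * s + 12) {C : Finset (ZMod n)} (hC : Stable2 n C)
  (hcard : #C = t + s + 5)
include hn hC hcard

lemma natCast_mem_of_disjoint_setA (hCA : Disjoint C ((setA t s).image Nat.cast))
    (he : e ∈ runStartsA t s) (he1 : e + 1 ∈ setA t s) : (e : ZMod n) ∈ C :=
  have : NeZero n := ⟨by omega⟩
  natCast_mem_of_forall_mem_or hC hCA (Or.inr (mem_runStartsA.mpr (by omega)))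
    (fun _ hm => setA_runStartsA_cover (hn ▸ hm)) (hcard ▸ card_runStartsA_le) he he1

lemma natCast_mem_of_disjoint_setB (hCB : Disjoint C ((setB t s).image Nat.cast))
    (he : e ∈ runStartsB t s) (he1 : e + 1 ∈ setB t s) : (e : ZMod n) ∈ C :=
  have : NeZero n := ⟨by omega⟩
  natCast_mem_of_forall_mem_or hC hCB (Or.inl (mem_runStartsB.mpr (by omega)))
    (fun _ hm => setB_runStartsB_cover (hn ▸ hm)) (hcard ▸ card_runStartsB_le) he he1

end ForcedPoints

lemma SG_four_le_dist_of_setA_setB {t s : ℕ} (hn : n = 2 * t + 3 * s + 12)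
    {A B : SGVert n (t + s + 5)} (hA : A.1 = (setA t s).image Nat.cast)
    (hB : B.1 = (setB t s).image Nat.cast) (hAB : (SG n (t + s + 5)).Reachable A B) :
    4 ≤ (SG n (t + s + 5)).dist A B := by
  have mem_A : ∀ m ∈ setA t s, (m : ZMod n) ∈ A.1 := fun m hm => hA ▸ mem_image_of_mem _ hm
  have mem_B : ∀ m ∈ setB t s, (m : ZMod n) ∈ B.1 := fun m hm => hB ▸ mem_image_of_mem _ hm
  have two_mem_of_disjoint_A : ∀ C : SGVert n (t + s + 5), Disjoint C.1 A.1 →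
      ((2 : ℕ) : ZMod n) ∈ C.1 := fun C hCA =>
    natCast_mem_of_disjoint_setA (e := 2) hn C.2.2 C.2.1 (hA ▸ hCA)
      (mem_runStartsA.mpr (by omega)) (mem_setA.mpr (by omega))
  have mem_of_disjoint_B : ∀ C : SGVert n (t + s + 5), Disjoint C.1 B.1 →
      ((2 : ℕ) : ZMod n) ∈ C.1 ∧ ((7 : ℕ) : ZMod n) ∈ C.1 := fun C hCB =>
    ⟨natCast_mem_of_disjoint_setB (e := 2) hn C.2.2 C.2.1 (hB ▸ hCB)
        (mem_runStartsB.mpr (by omega)) (mem_setB.mpr (by omega)),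
      natCast_mem_of_disjoint_setB (e := 7) hn C.2.2 C.2.1 (hB ▸ hCB)
        (mem_runStartsB.mpr (by omega)) (mem_setB.mpr (by omega))⟩
  refine hAB.four_le_dist ?_ ?_ ?_ ?_
  · intro h
    obtain ⟨m, hm, hm5⟩ := mem_image.mp (hB ▸ h ▸ mem_A 5 (mem_setA.mpr (by omega)))
    rw [mem_setB] at hm
    rw [ZMod.natCast_inj_of_lt (by omega) (by omega)] at hm5
    omega
  · rintro ⟨-, hdisj⟩
    exact disjoint_left.mp hdisj (mem_A 1 (mem_setA.mpr (by omega)))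
      (mem_B 1 (mem_setB.mpr (by omega)))
  · rintro C ⟨-, hAC⟩ ⟨-, hCB⟩
    exact disjoint_left.mp hAC (mem_A 7 (mem_setA.mpr (by omega)))
      (mem_of_disjoint_B C hCB).2
  · rintro C D ⟨-, hAC⟩ ⟨-, hDB⟩ ⟨-, hCD⟩
    exact disjoint_left.mp hCD (two_mem_of_disjoint_A C hAC.symm) (mem_of_disjoint_B D hDB).1

instance [NeZero n] : Finite (SGVert n k) :=
  inferInstanceAs (Finite {S : Finset (ZMod n) // S.card = k ∧ Stable2 n S})

theorem stmt16_general (n k r : ℕ) (hr1 : 2 ≤ r) (hr2 : r ≤ k - 3)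
    (hn : n = 2 * k + r)
    (hA : ((({1, 3, 5} : Finset ℕ) ∪
        (Finset.range (k - 3 - r + 1)).image (fun i => 7 + 2 * i) ∪
        (Finset.Icc 1 (r - 1)).image (fun j => 7 + 2 * (k - 3 - r) + 3 * j)).image
          (fun x : ℕ => (x : ZMod n))).card = k ∧
      Stable2 n ((({1, 3, 5} : Finset ℕ) ∪
        (Finset.range (k - 3 - r + 1)).image (fun i => 7 + 2 * i) ∪
        (Finset.Icc 1 (r - 1)).image (fun j => 7 + 2 * (k - 3 - r) + 3 * j)).image
          (fun x : ℕ => (x : ZMod n))))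
    (hB : ((({1, 3, 6} : Finset ℕ) ∪
        (Finset.range (k - 3 - r + 1)).image (fun i => 8 + 2 * i) ∪
        (Finset.Icc 1 (r - 1)).image (fun j => 8 + 2 * (k - 3 - r) + 3 * j)).image
          (fun x : ℕ => (x : ZMod n))).card = k ∧
      Stable2 n ((({1, 3, 6} : Finset ℕ) ∪
        (Finset.range (k - 3 - r + 1)).image (fun i => 8 + 2 * i) ∪
        (Finset.Icc 1 (r - 1)).image (fun j => 8 + 2 * (k - 3 - r) + 3 * j)).image
          (fun x : ℕ => (x : ZMod n)))) :
    4 ≤ (SG n k).dist ⟨_, hA⟩ ⟨_, hB⟩ ∧ 4 ≤ (SG n k).diam := by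
  obtain ⟨t, s, rfl, rfl⟩ : ∃ t s, k = t + s + 5 ∧ r = s + 2 :=
    ⟨k - 3 - r, r - 2, by omega, by omega⟩
  have ht : t + s + 5 - 3 - (s + 2) = t := by omega
  have hs : s + 2 - 1 = s + 1 := by omega
  have : NeZero n := ⟨by omega⟩
  have hconn := SG_connected (n := n) (k := t + s + 5) (by omega) (by omega)
  have h4 := SG_four_le_dist_of_setA_setB (A := ⟨_, hA⟩) (B := ⟨_, hB⟩) (by omega)
    (by simp only [ht, hs]; rfl) (by simp only [ht, hs]; rfl) (hconn _ _)
  have := hconn.nonempty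
  exact ⟨h4, h4.trans (SimpleGraph.dist_le_diam
    (SimpleGraph.connected_iff_ediam_ne_top.mp hconn))⟩

theorem stmt16 (n k r : ℕ) (hk : 5 ≤ k) (hr1 : 2 ≤ r) (hr2 : r ≤ k - 3)
    (hn : n = 2 * k + r)
    (hA : ((({1, 3, 5} : Finset ℕ) ∪
        (Finset.range (k - 3 - r + 1)).image (fun i => 7 + 2 * i) ∪
        (Finset.Icc 1 (r - 1)).image (fun j => 7 + 2 * (k - 3 - r) + 3 * j)).image
          (fun x : ℕ => (x : ZMod n))).card = k ∧
      Stable2 n ((({1, 3, 5} : Finset ℕ) ∪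
        (Finset.range (k - 3 - r + 1)).image (fun i => 7 + 2 * i) ∪
        (Finset.Icc 1 (r - 1)).image (fun j => 7 + 2 * (k - 3 - r) + 3 * j)).image
          (fun x : ℕ => (x : ZMod n))))
    (hB : ((({1, 3, 6} : Finset ℕ) ∪
        (Finset.range (k - 3 - r + 1)).image (fun i => 8 + 2 * i) ∪
        (Finset.Icc 1 (r - 1)).image (fun j => 8 + 2 * (k - 3 - r) + 3 * j)).image
          (fun x : ℕ => (x : ZMod n))).card = k ∧
      Stable2 n ((({1, 3, 6} : Finset ℕ) ∪
        (Finset.range (k - 3 - r + 1)).image (fun i => 8 + 2 * i) ∪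
        (Finset.Icc 1 (r - 1)).image (fun j => 8 + 2 * (k - 3 - r) + 3 * j)).image
          (fun x : ℕ => (x : ZMod n)))) :
    4 ≤ (SG n k).dist ⟨_, hA⟩ ⟨_, hB⟩ ∧ 4 ≤ (SG n k).diam :=
  stmt16_general n k r hr1 hr2 hn hA hB
end
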